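/- arXiv:math/0601150 — 7 statements merged into one kernel-verified Lean document; each statement's English description precedes it below -/
import Mathlib

section
/- Let ℓ, d be coprime positive integers, let A_ℓ = ℤ[X]/(Φ_{2ℓ}(X)) with v the image of X (a unit of A_ℓ), and set v_i = v^d and v_i^♯ = ((−1)^{ℓ+1} v^ℓ)^d. Then for natural numbers a, t: (i) if ℓ divides both a and t, the balanced Gaussian binomial coefficients satisfy [a, t]_{v_i} = [a/ℓ, t/ℓ]_{v_i^♯} in A_ℓ; (ii) if ℓ divides a but ℓ does not divide t, then [a, t]_{v_i} = 0 in A_ℓ. -/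
/-- The Gaussian binomial polynomial `B(m,k) ∈ ℤ[q]`, determined by the recursion
`B(m,0) = 1`, `B(0,k) = 0` for `k > 0`, and `B(m,k) = B(m-1,k-1) + q^k · B(m-1,k)`. -/
noncomputable def gaussBinomialPoly : ℕ → ℕ → Polynomial ℤ
  | _, 0 => 1
  | 0, _ + 1 => 0
  | m + 1, k + 1 =>
      gaussBinomialPoly m k + Polynomial.X ^ (k + 1) * gaussBinomialPoly m (k + 1)

/-- The balanced Gaussian binomial coefficient `[m, k]_w = w^{-k(m-k)} · B(m,k)(w²)`
attached to a unit `w` of a commutative ring `R`. -/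
noncomputable def balancedGaussBinomial {R : Type*} [CommRing R] (w : Rˣ) (m k : ℕ) : R :=
  ((w ^ (-((k : ℤ) * ((m : ℤ) - (k : ℤ))))) : Rˣ) *
    Polynomial.aeval ((w : R) ^ 2) (gaussBinomialPoly m k)

/-- The ring `A_ℓ = ℤ[X]/(Φ_{2ℓ}(X))`. -/
abbrev cyclotomicQuotientRing (ℓ : ℕ) : Type :=
  Polynomial ℤ ⧸ Ideal.span {Polynomial.cyclotomic (2 * ℓ) ℤ}

/-!
The Rogers–Szegő polynomial `H_m(x) = Σ_k B(m,k)(q) xᵏ` obeys `H_{m+1}(x) = x H_m(x) + H_m(qx)`,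
hence `H_{m+1}(qx) - H_{m+1}(x) = (q^{m+1} - 1) x H_m(x)`. If `q^ℓ = 1`, this makes `H_ℓ` invariant
under `x ↦ qx`, so `H_{m+ℓ} = H_ℓ H_m`. If moreover `q` is a primitive `ℓ`-th root of unity in a
domain, the invariance kills all coefficients of `H_ℓ` strictly between `0` and `ℓ`, so
`H_{ℓn} = (x^ℓ + 1)^n`: `B(ℓn, t)(q)` is `C(n, t/ℓ)` when `ℓ ∣ t` and `0` otherwise.

In `A_ℓ`, which is a domain of characteristic zero, `v` is a primitive `2ℓ`-th root of unity. So
`v_i² = (v²)^d` is a primitive `ℓ`-th root of unity, and `v^ℓ = -1` gives `v_i^♯ = v_i^{ℓ²}`, whose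
square is `1`, so that `B(a/ℓ, t/ℓ)(v_i^♯²)` is an ordinary binomial coefficient.
-/

open Polynomial

theorem gaussBinomialPoly_zero_right (m : ℕ) : gaussBinomialPoly m 0 = 1 := by
  cases m <;> rfl

theorem gaussBinomialPoly_eq_zero_of_lt {m k : ℕ} (h : m < k) : gaussBinomialPoly m k = 0 := by
  induction m generalizing k with
  | zero => obtain ⟨k, rfl⟩ := Nat.exists_eq_succ_of_ne_zero h.ne'; rfl
  | succ m ih =>
    obtain ⟨k, rfl⟩ := Nat.exists_eq_succ_of_ne_zero (Nat.ne_zero_of_lt h)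
    rw [gaussBinomialPoly, ih (by omega), ih (by omega), mul_zero, add_zero]

theorem gaussBinomialPoly_self (m : ℕ) : gaussBinomialPoly m m = 1 := by
  induction m with
  | zero => rfl
  | succ m ih =>
    rw [gaussBinomialPoly, ih, gaussBinomialPoly_eq_zero_of_lt m.lt_succ_self, mul_zero, add_zero]

section RogersSzego

variable {R : Type*} [CommRing R]

noncomputable def rogersSzego (q : R) : ℕ → R[X]
  | 0 => 1
  | m + 1 => X * rogersSzego q m + (rogersSzego q m).comp (C q * X)

theorem coeff_rogersSzego (q : R) (m k : ℕ) :
    (rogersSzego q m).coeff k = aeval q (gaussBinomialPoly m k) := by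
  induction m generalizing k with
  | zero => cases k <;> simp [rogersSzego, gaussBinomialPoly, coeff_one]
  | succ m ih =>
    cases k with
    | zero => simp [rogersSzego, ih, gaussBinomialPoly_zero_right]
    | succ k =>
      simp only [rogersSzego, gaussBinomialPoly, coeff_add, coeff_X_mul, comp_C_mul_X_coeff, ih,
        map_add, map_mul, map_pow, aeval_X]
      ring

theorem rogersSzego_succ_comp_sub (q : R) (m : ℕ) :
    (rogersSzego q (m + 1)).comp (C q * X) - rogersSzego q (m + 1) =
      C (q ^ (m + 1) - 1) * X * rogersSzego q m := by
  induction m with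
  | zero => simp [rogersSzego, sub_mul]
  | succ m ih =>
    have ih' := congrArg (·.comp (C q * X)) ih
    simp only [sub_comp, mul_comp, C_comp, X_comp] at ih'
    have hG : rogersSzego q (m + 1) = X * rogersSzego q m + (rogersSzego q m).comp (C q * X) :=
      rfl
    rw [rogersSzego, add_comp, mul_comp, X_comp]
    simp only [map_sub, map_pow, map_one] at ih' ih ⊢
    linear_combination ih' + C q * X * ih - (C q ^ (m + 1) - 1) * C q * X * hG

theorem rogersSzego_comp_of_pow_eq_one {q : R} {ℓ : ℕ} (hq : q ^ ℓ = 1) :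
    (rogersSzego q ℓ).comp (C q * X) = rogersSzego q ℓ := by
  cases ℓ with
  | zero => simp [rogersSzego]
  | succ ℓ =>
    rw [← sub_eq_zero, rogersSzego_succ_comp_sub, hq, sub_self, map_zero, zero_mul, zero_mul]

theorem rogersSzego_add_of_pow_eq_one {q : R} {ℓ : ℕ} (hq : q ^ ℓ = 1) (m : ℕ) :
    rogersSzego q (m + ℓ) = rogersSzego q ℓ * rogersSzego q m := by
  induction m with
  | zero => simp [rogersSzego]
  | succ m ih =>
    rw [Nat.add_right_comm, rogersSzego, ih, mul_comp, rogersSzego_comp_of_pow_eq_one hq,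
      rogersSzego]
    ring

theorem rogersSzego_mul_of_pow_eq_one {q : R} {ℓ : ℕ} (hq : q ^ ℓ = 1) (n : ℕ) :
    rogersSzego q (ℓ * n) = rogersSzego q ℓ ^ n := by
  induction n with
  | zero => rfl
  | succ n ih => rw [Nat.mul_succ, rogersSzego_add_of_pow_eq_one hq, ih, pow_succ']

theorem rogersSzego_one (m : ℕ) : rogersSzego (1 : R) m = (X + 1) ^ m := by
  simpa [rogersSzego] using rogersSzego_mul_of_pow_eq_one (one_pow 1 : (1 : R) ^ 1 = 1) m

theorem aeval_one_gaussBinomialPoly (m k : ℕ) :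
    aeval (1 : R) (gaussBinomialPoly m k) = m.choose k := by
  rw [← coeff_rogersSzego, rogersSzego_one, coeff_X_add_one_pow]

theorem IsPrimitiveRoot.rogersSzego_eq [IsDomain R] {q : R} {ℓ : ℕ} (hq : IsPrimitiveRoot q ℓ)
    (hℓ : 0 < ℓ) : rogersSzego q ℓ = X ^ ℓ + 1 := by
  ext k
  rw [coeff_rogersSzego, coeff_add, coeff_X_pow, coeff_one]
  rcases Nat.lt_trichotomy k ℓ with hk | rfl | hk
  · rcases Nat.eq_zero_or_pos k with rfl | hk0
    · simp [gaussBinomialPoly_zero_right, hℓ.ne]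
    · have h := congrArg (·.coeff k) (rogersSzego_comp_of_pow_eq_one hq.pow_eq_one)
      simp only [comp_C_mul_X_coeff, coeff_rogersSzego] at h
      have hne : q ^ k - 1 ≠ 0 := sub_ne_zero.mpr (hq.pow_ne_one_of_pos_of_lt hk0.ne' hk)
      have : aeval q (gaussBinomialPoly ℓ k) * (q ^ k - 1) = 0 := by linear_combination h
      simp [(mul_eq_zero.mp this).resolve_right hne, hk.ne, hk0.ne']
  · simp [gaussBinomialPoly_self, hℓ.ne']
  · simp [gaussBinomialPoly_eq_zero_of_lt hk, hk.ne', (hℓ.trans hk).ne']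

theorem IsPrimitiveRoot.aeval_gaussBinomialPoly_mul [IsDomain R] {q : R} {ℓ : ℕ}
    (hq : IsPrimitiveRoot q ℓ) (hℓ : 0 < ℓ) (n t : ℕ) :
    aeval q (gaussBinomialPoly (ℓ * n) t) = if ℓ ∣ t then (n.choose (t / ℓ) : R) else 0 := by
  rw [← coeff_rogersSzego, rogersSzego_mul_of_pow_eq_one hq.pow_eq_one,
    hq.rogersSzego_eq hℓ, ← expand_X (R := R) (p := ℓ), ← map_one (expand R ℓ),
    ← map_add, ← map_pow, coeff_expand hℓ, coeff_X_add_one_pow]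

end RogersSzego

section Cyclotomic

variable {n : ℕ}

theorem AdjoinRoot.isDomain_cyclotomic (hn : 0 < n) : IsDomain (AdjoinRoot (cyclotomic n ℤ)) :=
  AdjoinRoot.isDomain_of_prime (cyclotomic.irreducible hn).prime

theorem AdjoinRoot.isPrimitiveRoot_root_cyclotomic (hn : 0 < n) :
    IsPrimitiveRoot (AdjoinRoot.root (cyclotomic n ℤ)) n := by
  have := AdjoinRoot.isDomain_cyclotomic hn
  have : CharZero (AdjoinRoot (cyclotomic n ℤ)) := charZero_of_injective_ringHom
    (AdjoinRoot.of.injective_of_degree_ne_zero (by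
      rw [degree_cyclotomic, Nat.cast_ne_zero]; exact (Nat.totient_pos.mpr hn).ne'))
  rw [← isRoot_cyclotomic_iff_charZero hn, ← map_cyclotomic n (AdjoinRoot.of _)]
  exact AdjoinRoot.isRoot_root _

end Cyclotomic

section Balanced

variable {R : Type*} [CommRing R] [IsDomain R] {w : Rˣ} {ℓ : ℕ}

theorem IsPrimitiveRoot.balancedGaussBinomial_mul_mul (hw : IsPrimitiveRoot ((w : R) ^ 2) ℓ)
    (hℓ : 0 < ℓ) (n k : ℕ) :
    balancedGaussBinomial w (ℓ * n) (ℓ * k) = balancedGaussBinomial (w ^ (ℓ ^ 2)) n k := by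
  have hsq : ((w ^ (ℓ ^ 2) : Rˣ) : R) ^ 2 = 1 := by
    rw [Units.val_pow_eq_pow_val, ← pow_mul, show ℓ ^ 2 * 2 = 2 * ℓ * ℓ by ring, pow_mul, pow_mul,
      hw.pow_eq_one, one_pow]
  unfold balancedGaussBinomial
  rw [hw.aeval_gaussBinomialPoly_mul hℓ, if_pos (dvd_mul_right ℓ k),
    Nat.mul_div_cancel_left k hℓ, hsq, aeval_one_gaussBinomialPoly, ← zpow_natCast, ← zpow_mul]
  congr 3
  push_cast
  ring

theorem IsPrimitiveRoot.balancedGaussBinomial_mul_eq_zero (hw : IsPrimitiveRoot ((w : R) ^ 2) ℓ)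
    (hℓ : 0 < ℓ) (n : ℕ) {t : ℕ} (ht : ¬ ℓ ∣ t) : balancedGaussBinomial w (ℓ * n) t = 0 := by
  rw [balancedGaussBinomial, hw.aeval_gaussBinomialPoly_mul hℓ, if_neg ht, mul_zero]

end Balanced

theorem balancedGaussBinomial_cyclotomicQuotient_general (ℓ d : ℕ) (hℓ : 0 < ℓ)
    (hcop : Nat.Coprime ℓ d) (v : (cyclotomicQuotientRing ℓ)ˣ)
    (hv : (v : cyclotomicQuotientRing ℓ) =
      Ideal.Quotient.mk (Ideal.span {Polynomial.cyclotomic (2 * ℓ) ℤ}) Polynomial.X)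
    (a t : ℕ) :
    (ℓ ∣ a → ℓ ∣ t →
      balancedGaussBinomial (v ^ d) a t =
        balancedGaussBinomial (((-1 : (cyclotomicQuotientRing ℓ)ˣ) ^ (ℓ + 1) * v ^ ℓ) ^ d)
          (a / ℓ) (t / ℓ)) ∧
    (ℓ ∣ a → ¬ ℓ ∣ t → balancedGaussBinomial (v ^ d) a t = 0) := by
  have : IsDomain (cyclotomicQuotientRing ℓ) := AdjoinRoot.isDomain_cyclotomic (by omega)
  have hvprim : IsPrimitiveRoot (v : cyclotomicQuotientRing ℓ) (2 * ℓ) := by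
    rw [hv]; exact AdjoinRoot.isPrimitiveRoot_root_cyclotomic (by omega)
  have hw : IsPrimitiveRoot ((↑(v ^ d) : cyclotomicQuotientRing ℓ) ^ 2) ℓ := by
    rw [Units.val_pow_eq_pow_val, ← pow_mul, pow_mul']
    exact (hvprim.pow (by omega) rfl).pow_of_coprime d hcop.symm
  have hvℓ : v ^ ℓ = -1 := Units.ext (by
    simpa using (hvprim.pow (by omega) (mul_comm 2 ℓ)).eq_neg_one_of_two_right)
  have hsharp : ((-1) ^ (ℓ + 1) * v ^ ℓ) ^ d = (v ^ d) ^ (ℓ ^ 2) := by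
    rw [← pow_mul, show d * ℓ ^ 2 = ℓ * ℓ * d by ring, pow_mul, pow_mul, hvℓ]
    ext; push_cast; ring
  refine ⟨?_, ?_⟩
  · rintro ⟨n, rfl⟩ ⟨k, rfl⟩
    rw [hw.balancedGaussBinomial_mul_mul hℓ, hsharp, Nat.mul_div_cancel_left n hℓ,
      Nat.mul_div_cancel_left k hℓ]
  · rintro ⟨n, rfl⟩ ht
    exact hw.balancedGaussBinomial_mul_eq_zero hℓ n ht

/-- Let `ℓ, d` be coprime positive integers, let `A_ℓ = ℤ[X]/(Φ_{2ℓ}(X))` with `v` the image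
of `X` (a unit of `A_ℓ`), and set `v_i = v^d` and `v_i^♯ = ((-1)^{ℓ+1} v^ℓ)^d`.  Then for
natural numbers `a, t`:  (i) if `ℓ ∣ a` and `ℓ ∣ t` then `[a, t]_{v_i} = [a/ℓ, t/ℓ]_{v_i^♯}`
in `A_ℓ`; (ii) if `ℓ ∣ a` but `ℓ ∤ t` then `[a, t]_{v_i} = 0` in `A_ℓ`. -/
theorem balancedGaussBinomial_cyclotomicQuotient (ℓ d : ℕ) (hℓ : 0 < ℓ) (hd : 0 < d)
    (hcop : Nat.Coprime ℓ d) (v : (cyclotomicQuotientRing ℓ)ˣ)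
    (hv : (v : cyclotomicQuotientRing ℓ) =
      Ideal.Quotient.mk (Ideal.span {Polynomial.cyclotomic (2 * ℓ) ℤ}) Polynomial.X)
    (a t : ℕ) :
    (ℓ ∣ a → ℓ ∣ t →
      balancedGaussBinomial (v ^ d) a t =
        balancedGaussBinomial (((-1 : (cyclotomicQuotientRing ℓ)ˣ) ^ (ℓ + 1) * v ^ ℓ) ^ d)
          (a / ℓ) (t / ℓ)) ∧
    (ℓ ∣ a → ¬ ℓ ∣ t → balancedGaussBinomial (v ^ d) a t = 0) :=
  balancedGaussBinomial_cyclotomicQuotient_general ℓ d hℓ hcop v hv a t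
end

section
/- Let R be an integral domain, l a positive integer, and 𝐯 ∈ Rˣ a unit such that 𝐯^{2l} = 1 and 𝐯^{2t} ≠ 1 for all 0 < t < l. Suppose m ≥ k ≥ 0 are natural numbers, and write m = m₁·l + s and k = k₁·l + t with 0 ≤ s, t < l. Then the balanced Gaussian binomial coefficients satisfy [m, k]_𝐯 = 𝐯^{l(k₁s − m₁t) + (m₁+1)k₁l²} · C(m₁, k₁) · [s, t]_𝐯 in R, where C(m₁, k₁) is the ordinary binomial coefficient. -/
open Polynomial

section GBAux
variable {R : Type*} [CommRing R]

/-- Evaluation of the Gaussian binomial polynomial at `q`. -/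
noncomputable def gbEval (q : R) (m k : ℕ) : R := aeval q (gaussBinomialPoly m k)

lemma gbEval_zero_right (q : R) (m : ℕ) : gbEval q m 0 = 1 := by
  cases m <;> simp [gbEval, gaussBinomialPoly]

lemma gbEval_zero_left (q : R) (k : ℕ) : gbEval q 0 (k+1) = 0 := by
  simp [gbEval, gaussBinomialPoly]

lemma gbEval_succ (q : R) (m k : ℕ) :
    gbEval q (m+1) (k+1) = gbEval q m k + q^(k+1) * gbEval q m (k+1) := by
  simp [gbEval, gaussBinomialPoly, map_add, map_mul, map_pow]

lemma gbEval_eq_zero (q : R) : ∀ m k, m < k → gbEval q m k = 0 := by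
  intro m
  induction m with
  | zero => intro k hk; obtain ⟨k, rfl⟩ := Nat.exists_eq_add_of_lt hk; simp [gbEval_zero_left]
  | succ m ih =>
    intro k hk
    obtain ⟨k', rfl⟩ : ∃ k', k = k' + 1 := ⟨k - 1, by omega⟩
    rw [gbEval_succ, ih k' (by omega), ih (k'+1) (by omega)]
    ring

lemma gbEval_self (q : R) : ∀ n, gbEval q n n = 1 := by
  intro n
  induction n with
  | zero => simp [gbEval_zero_right]
  | succ n ih => rw [gbEval_succ, ih, gbEval_eq_zero q n (n+1) (by omega)]; ring

/-- The second Pascal-type recursion for Gaussian binomials. -/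
lemma gbEval_second (q : R) : ∀ m j k, m = j + k →
    gbEval q (m+1) (k+1) = q ^ j * gbEval q m k + gbEval q m (k+1) := by
  intro m
  induction m with
  | zero =>
    intro j k h
    obtain ⟨rfl, rfl⟩ : j = 0 ∧ k = 0 := by omega
    simp [gbEval_self, gbEval_zero_left, gbEval_zero_right]
  | succ m ih =>
    intro j k h
    cases k with
    | zero =>
      obtain rfl : j = m + 1 := by omega
      have h1 := ih m 0 rfl
      have h2 := gbEval_succ q m 0
      have h3 := gbEval_succ q (m+1) 0
      simp only [gbEval_zero_right] at h1 h2 h3 ⊢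
      linear_combination h3 + q * h1 - h2
    | succ k' =>
      cases j with
      | zero =>
        obtain rfl : m = k' := by omega
        rw [gbEval_succ, gbEval_self, gbEval_eq_zero q (m+1) (m+2) (by omega)]
        ring
      | succ j' =>
        have H1 := ih (j'+1) k' (by omega)
        have H2 := ih j' (k'+1) (by omega)
        have H3 := gbEval_succ q m k'
        have H4 := gbEval_succ q m (k'+1)
        have H5 := gbEval_succ q (m+1) (k'+1)
        linear_combination H5 + H1 + (q^(k'+2)) * H2 - (q^(j'+1)) * H3 - H4

end GBAux

section Primitive
variable {R : Type*} [CommRing R] [IsDomain R]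

omit [IsDomain R] in
lemma gb_rel (q : R) (m j k : ℕ) (h : m = j + k) :
    (1 - q^j) * gbEval q m k = (1 - q^(k+1)) * gbEval q m (k+1) := by
  have H1 := gbEval_succ q m k
  have H2 := gbEval_second q m j k h
  linear_combination H2 - H1

/-- At a primitive `l`-th root of unity the row `l` of Gaussian binomials vanishes
in the interior. -/
lemma gb_row (q : R) (l : ℕ) (hql : q ^ l = 1)
    (hq : ∀ t : ℕ, 0 < t → t < l → q ^ t ≠ 1) :
    ∀ k, 0 < k → k < l → gbEval q l k = 0 := by
  have main : ∀ k : ℕ, k + 1 < l → gbEval q l (k+1) = 0 := by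
    intro k
    induction k with
    | zero =>
      intro h1
      have hrel := gb_rel q l l 0 (by omega)
      rw [hql, gbEval_zero_right, sub_self, zero_mul] at hrel
      have hne : (1 : R) - q ^ (0+1) ≠ 0 := by
        intro hc
        exact hq 1 (by omega) (by omega) (by linear_combination -hc)
      rcases mul_eq_zero.mp hrel.symm with h | h
      · exact absurd h hne
      · exact h
    | succ k ihk =>
      intro h1
      have hrel := gb_rel q l (l - (k+1)) (k+1) (by omega)
      rw [ihk (by omega), mul_zero] at hrel
      have hne : (1 : R) - q ^ (k+1+1) ≠ 0 := by
        intro hc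
        exact hq (k+2) (by omega) (by omega) (by linear_combination -hc)
      rcases mul_eq_zero.mp hrel.symm with h | h
      · exact absurd h hne
      · exact h
  intro k hk0 hkl
  obtain ⟨k', rfl⟩ : ∃ k', k = k' + 1 := ⟨k - 1, by omega⟩
  exact main k' hkl

/-- Periodicity of Gaussian binomials at a primitive `l`-th root of unity. -/
lemma gb_period (q : R) (l : ℕ) (hl : 0 < l) (hql : q ^ l = 1)
    (hq : ∀ t : ℕ, 0 < t → t < l → q ^ t ≠ 1) :
    ∀ m k : ℕ, gbEval q (m + l) k =
      gbEval q m k + (if l ≤ k then gbEval q m (k - l) else 0) := by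
  intro m
  induction m with
  | zero =>
    intro k
    simp only [Nat.zero_add]
    rcases Nat.lt_or_ge k l with hkl | hlk
    · rw [if_neg (by omega)]
      rcases Nat.eq_zero_or_pos k with rfl | hk0
      · rw [gbEval_zero_right, gbEval_zero_right]; ring
      · rw [gb_row q l hql hq k hk0 hkl, gbEval_eq_zero q 0 k hk0]; ring
    · rcases Nat.lt_or_ge l k with hlk' | hge
      · rw [if_pos hlk, gbEval_eq_zero q l k hlk', gbEval_eq_zero q 0 k (by omega),
          gbEval_eq_zero q 0 (k - l) (by omega)]
        ring
      · have hkeq : l = k := by omega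
        subst hkeq
        rw [if_pos le_rfl, Nat.sub_self, gbEval_self, gbEval_eq_zero q 0 l (by omega),
          gbEval_zero_right]
        ring
  | succ m ih =>
    intro k
    have e : m + 1 + l = (m + l) + 1 := by omega
    cases k with
    | zero => rw [e, gbEval_zero_right, gbEval_zero_right, if_neg (by omega)]; ring
    | succ k'' =>
      rw [e, gbEval_succ, ih k'', ih (k''+1), gbEval_succ]
      rcases Nat.lt_or_ge k'' l with hkl | hlk
      · rcases Nat.lt_or_ge (k''+1) l with h2 | h2
        · rw [if_neg (by omega), if_neg (by omega), if_neg (by omega)]; ring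
        · obtain rfl : l = k'' + 1 := by omega
          rw [if_neg (by omega), if_pos h2, if_pos h2, Nat.sub_self, gbEval_zero_right,
            gbEval_zero_right, hql]
          ring
      · have h2 : l ≤ k'' + 1 := by omega
        rw [if_pos hlk, if_pos h2, if_pos h2]
        have e2 : k'' + 1 - l = (k'' - l) + 1 := by omega
        rw [e2, gbEval_succ]
        have e3 : q ^ (k''+1) = q ^ ((k'' - l) + 1) := by
          have : k'' + 1 = ((k'' - l) + 1) + l := by omega
          rw [this, pow_add, hql, mul_one]
        rw [e3]
        ring

/-- The `q`-Lucas theorem at a primitive `l`-th root of unity. -/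
lemma gb_lucas (q : R) (l : ℕ) (hl : 0 < l) (hql : q ^ l = 1)
    (hq : ∀ t : ℕ, 0 < t → t < l → q ^ t ≠ 1) :
    ∀ m₁ k₁ s t : ℕ, s < l → t < l →
      gbEval q (m₁ * l + s) (k₁ * l + t) = (m₁.choose k₁ : R) * gbEval q s t := by
  intro m₁
  induction m₁ with
  | zero =>
    intro k₁ s t hs ht
    cases k₁ with
    | zero => simp
    | succ k₁ =>
      rw [gbEval_eq_zero q (0 * l + s) ((k₁+1) * l + t)
        (by simp only [Nat.succ_mul]; omega)]
      simp
  | succ m₁ ih =>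
    intro k₁ s t hs ht
    have e : (m₁+1) * l + s = (m₁ * l + s) + l := by rw [Nat.succ_mul]; omega
    rw [e, gb_period q l hl hql hq]
    cases k₁ with
    | zero =>
      rw [if_neg (by omega)]
      have := ih 0 s t hs ht
      simp only [Nat.zero_mul, Nat.zero_add, Nat.choose_zero_right, Nat.cast_one,
        one_mul] at this ⊢
      rw [this]; ring
    | succ k₁ =>
      rw [if_pos (by rw [Nat.succ_mul]; omega)]
      have e2 : (k₁+1) * l + t - l = k₁ * l + t := by rw [Nat.succ_mul]; omega
      rw [e2, ih (k₁+1) s t hs ht, ih k₁ s t hs ht, Nat.choose_succ_succ, Nat.cast_add]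
      ring

end Primitive

/-- Lusztig's lemma on Gaussian binomial coefficients at a root of unity: if `𝐯` is a unit
of an integral domain with `𝐯^{2l} = 1` and `𝐯^{2t} ≠ 1` for `0 < t < l`, and
`m = m₁l + s`, `k = k₁l + t` with `0 ≤ s, t < l` and `m ≥ k`, then
`[m, k]_𝐯 = 𝐯^{l(k₁s - m₁t) + (m₁+1)k₁l²} · C(m₁, k₁) · [s, t]_𝐯`. -/
theorem balancedGaussBinomial_decompose {R : Type*} [CommRing R] [IsDomain R]
    (l : ℕ) (hl : 0 < l) (v : Rˣ) (h1 : v ^ (2 * l) = 1)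
    (h2 : ∀ t : ℕ, 0 < t → t < l → v ^ (2 * t) ≠ 1)
    (m k m₁ s k₁ t : ℕ) (hkm : k ≤ m)
    (hm : m = m₁ * l + s) (hs : s < l) (hk : k = k₁ * l + t) (ht : t < l) :
    balancedGaussBinomial v m k =
      ((v ^ ((l : ℤ) * ((k₁ : ℤ) * (s : ℤ) - (m₁ : ℤ) * (t : ℤ)) +
          ((m₁ : ℤ) + 1) * (k₁ : ℤ) * (l : ℤ) ^ 2)) : Rˣ) *
        (m₁.choose k₁ : R) * balancedGaussBinomial v s t := by
  have hql : ((v : R) ^ 2) ^ l = 1 := by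
    rw [← pow_mul, ← Units.val_pow_eq_pow_val, h1, Units.val_one]
  have hq : ∀ t : ℕ, 0 < t → t < l → ((v : R) ^ 2) ^ t ≠ 1 := by
    intro t ht0 htl hc
    apply h2 t ht0 htl
    apply Units.ext
    rw [Units.val_pow_eq_pow_val, Units.val_one, pow_mul]
    exact hc
  have key : Polynomial.aeval ((v : R) ^ 2) (gaussBinomialPoly m k) =
      (m₁.choose k₁ : R) * Polynomial.aeval ((v : R) ^ 2) (gaussBinomialPoly s t) := by
    have := gb_lucas ((v : R) ^ 2) l hl hql hq m₁ k₁ s t hs ht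
    rw [← hm, ← hk] at this
    exact this
  set A : ℤ := (l : ℤ) * ((k₁ : ℤ) * (s : ℤ) - (m₁ : ℤ) * (t : ℤ)) +
      ((m₁ : ℤ) + 1) * (k₁ : ℤ) * (l : ℤ) ^ 2 with hA
  set b : ℤ := -((t : ℤ) * ((s : ℤ) - (t : ℤ))) with hb
  obtain ⟨c, hc⟩ := Int.even_mul_succ_self ((k₁ : ℤ) - 1)
  set N : ℤ := -((k₁ : ℤ) * ((s : ℤ) - (t : ℤ)) + (l : ℤ) * (m₁ : ℤ) * (k₁ : ℤ) - (l : ℤ) * c)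
    with hN
  have hexp : -((k : ℤ) * ((m : ℤ) - (k : ℤ))) = (A + b) + (2 * (l : ℤ)) * N := by
    subst hm hk
    rw [hA, hb, hN]
    push_cast
    linear_combination (l : ℤ) ^ 2 * hc
  have h2l : v ^ ((2 : ℤ) * (l : ℤ)) = 1 := by
    rw [show (2 : ℤ) * (l : ℤ) = ((2 * l : ℕ) : ℤ) by push_cast; ring, zpow_natCast, h1]
  have hu : v ^ (-((k : ℤ) * ((m : ℤ) - (k : ℤ)))) = v ^ A * v ^ b := by
    rw [hexp, zpow_add, zpow_mul, h2l, one_zpow, mul_one, zpow_add]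
  unfold balancedGaussBinomial
  rw [key, hu]
  simp only [Units.val_mul]
  ring
end

section
/- Let ℓ be a positive integer, let ζ ∈ ℂ be a primitive 2ℓ-th root of unity (e.g. ζ = e^{πi/ℓ}), and let R = ℤ[ζ] be the subring of ℂ generated by ζ (Algebra.adjoin ℤ {ζ}). Let S ⊆ ℕ be an infinite set of positive integers. If a ∈ R is such that for every q ∈ S the element ζ² − q divides a in R (i.e. there exists b ∈ R with a = (ζ² − q)·b), then a = 0. In other words, the intersection of the principal ideals (ζ² − q) over q ∈ S is the zero ideal. -/
/-!
For an algebraic integer `w` of a number field, every conjugate of `w - q` has modulus at least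
`q - house w`, so `|N(w - q)| ≥ q - house w` as soon as `q ≥ house w + 1`. If `w - q` divides a
nonzero algebraic integer `a`, its norm divides the nonzero integer `N(a)`, which bounds `q`.
Since `ℤ[ζ]` lies in the ring of integers of `ℚ(ζ)`, this applies to `w = ζ²`.
-/

open NumberField IntermediateField

namespace NumberField

variable {K : Type*} [Field K] [NumberField K]

theorem natCast_sub_house_le_abs_norm_sub {w : K} {q : ℕ} (hq : house w + 1 ≤ q) :
    (q : ℝ) - house w ≤ |(Algebra.norm ℚ (w - q) : ℝ)| := by
  have hconj (σ : K →ₐ[ℚ] ℂ) : (q : ℝ) - house w ≤ ‖σ (w - q)‖ :=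
    calc (q : ℝ) - house w ≤ ‖(q : ℂ)‖ - ‖σ w‖ := by
          rw [Complex.norm_natCast]
          gcongr
          exact norm_embedding_le_house w (σ : K →+* ℂ)
      _ ≤ ‖σ (w - q)‖ := by
          rw [map_sub, map_natCast, norm_sub_rev]
          exact norm_sub_norm_le _ _
  have : Nonempty (K →ₐ[ℚ] ℂ) := ⟨IsAlgClosed.lift⟩
  calc (q : ℝ) - house w ≤ ((q : ℝ) - house w) ^ Fintype.card (K →ₐ[ℚ] ℂ) :=
        le_self_pow₀ (by linarith) Fintype.card_ne_zero
    _ ≤ ∏ σ : K →ₐ[ℚ] ℂ, ‖σ (w - q)‖ := by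
        rw [← Finset.card_univ, ← Finset.prod_const]
        exact Finset.prod_le_prod (fun _ _ => by linarith) (fun σ _ => hconj σ)
    _ = |(Algebra.norm ℚ (w - q) : ℝ)| := by
        rw [← norm_prod, ← Algebra.norm_eq_prod_embeddings, eq_ratCast, Complex.norm_ratCast]

namespace RingOfIntegers

theorem natAbs_norm_le_of_dvd {a c : 𝓞 K} (h : c ∣ a) (ha : a ≠ 0) :
    (Algebra.norm ℤ c).natAbs ≤ (Algebra.norm ℤ a).natAbs :=
  Int.natAbs_le_of_dvd_ne_zero (map_dvd _ h) (Algebra.norm_ne_zero_iff.mpr ha)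

theorem natCast_le_house_add_natAbs_norm_of_sub_dvd {w a : 𝓞 K} {q : ℕ} (h : w - q ∣ a)
    (ha : a ≠ 0) : (q : ℝ) ≤ house (w : K) + 1 + (Algebra.norm ℤ a).natAbs := by
  rcases lt_or_ge (q : ℝ) (house (w : K) + 1) with hq | hq
  · linarith [(Nat.cast_nonneg _ : (0 : ℝ) ≤ (Algebra.norm ℤ a).natAbs)]
  have hcoe : ((w - q : 𝓞 K) : K) = (w : K) - q := by push_cast; rfl
  have := calc (q : ℝ) - house (w : K) ≤ |(Algebra.norm ℚ ((w : K) - q) : ℝ)| :=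
        natCast_sub_house_le_abs_norm_sub hq
    _ = (Algebra.norm ℤ (w - q)).natAbs := by
        rw [← hcoe, ← Algebra.coe_norm_int, Rat.cast_intCast, Nat.cast_natAbs, Int.cast_abs]
    _ ≤ (Algebra.norm ℤ a).natAbs := by exact_mod_cast natAbs_norm_le_of_dvd h ha
  linarith

theorem finite_setOf_sub_natCast_dvd (w : 𝓞 K) {a : 𝓞 K} (ha : a ≠ 0) :
    {q : ℕ | w - q ∣ a}.Finite :=
  (Set.finite_Iic ⌈house (w : K) + 1 + (Algebra.norm ℤ a).natAbs⌉₊).subset fun _ hq =>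
    Nat.cast_le.mp ((natCast_le_house_add_natAbs_norm_of_sub_dvd hq ha).trans (Nat.le_ceil _))

end RingOfIntegers

end NumberField

theorem Algebra.adjoin_singleton_le_range_ringOfIntegers {L : Type*} [Field L] [Algebra ℚ L]
    {x : L} (hx : IsIntegral ℤ x) :
    Algebra.adjoin ℤ {x} ≤ (IsScalarTower.toAlgHom ℤ (𝓞 ℚ⟮x⟯) L).range := by
  rw [Algebra.adjoin_le_iff, Set.singleton_subset_iff]
  exact ⟨⟨AdjoinSimple.gen ℚ x, (isIntegral_algebraMap_iff (algebraMap ℚ⟮x⟯ L).injective).mp hx⟩,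
    rfl⟩

theorem eq_zero_of_forall_dvd_in_adjoin_primitiveRoot_general (ℓ : ℕ) (hℓ : 0 < ℓ) (ζ : ℂ)
    (hζ : IsPrimitiveRoot ζ (2 * ℓ)) (S : Set ℕ) (hS : S.Infinite)
    (a : ℂ) (ha : a ∈ Algebra.adjoin ℤ {ζ})
    (hdvd : ∀ q ∈ S, ∃ b ∈ Algebra.adjoin ℤ {ζ}, a = (ζ ^ 2 - (q : ℂ)) * b) :
    a = 0 := by
  have hζint : IsIntegral ℤ ζ := hζ.isIntegral (by omega)
  have : FiniteDimensional ℚ ℚ⟮ζ⟯ := adjoin.finiteDimensional hζint.tower_top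
  have : NumberField ℚ⟮ζ⟯ := ⟨⟩
  set ι := IsScalarTower.toAlgHom ℤ (𝓞 ℚ⟮ζ⟯) ℂ
  have hι : Function.Injective ι := FaithfulSMul.algebraMap_injective (𝓞 ℚ⟮ζ⟯) ℂ
  have hlift := Algebra.adjoin_singleton_le_range_ringOfIntegers hζint
  obtain ⟨z, hz⟩ := hlift (Algebra.self_mem_adjoin_singleton ℤ ζ)
  obtain ⟨a, rfl⟩ := hlift ha
  by_contra ha0
  have ha0' : a ≠ 0 := by rintro rfl; exact ha0 (map_zero ι)
  refine hS ((RingOfIntegers.finite_setOf_sub_natCast_dvd (z ^ 2) ha0').subset fun q hq => ?_)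
  obtain ⟨b, hb, hab⟩ := hdvd q hq
  obtain ⟨b, rfl⟩ := hlift hb
  refine ⟨b, hι ?_⟩
  rw [map_mul, map_sub, map_pow, map_natCast]
  exact hab.trans (congrArg (fun c => (c ^ 2 - (q : ℂ)) * ι b) hz.symm)

/-- Let `ζ ∈ ℂ` be a primitive `2ℓ`-th root of unity and `R = ℤ[ζ]` the subring of `ℂ` it
generates.  If `S ⊆ ℕ` is an infinite set of positive integers and `a ∈ R` is divisible in
`R` by `ζ² - q` for every `q ∈ S`, then `a = 0`; i.e. `⋂_{q ∈ S} (ζ² - q) = 0`. -/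
theorem eq_zero_of_forall_dvd_in_adjoin_primitiveRoot (ℓ : ℕ) (hℓ : 0 < ℓ) (ζ : ℂ)
    (hζ : IsPrimitiveRoot ζ (2 * ℓ)) (S : Set ℕ) (hS : S.Infinite)
    (hSpos : ∀ q ∈ S, 0 < q) (a : ℂ) (ha : a ∈ Algebra.adjoin ℤ {ζ})
    (hdvd : ∀ q ∈ S, ∃ b ∈ Algebra.adjoin ℤ {ζ}, a = (ζ ^ 2 - (q : ℂ)) * b) :
    a = 0 :=
  eq_zero_of_forall_dvd_in_adjoin_primitiveRoot_general ℓ hℓ ζ hζ S hS a ha hdvd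
end

section
/- Let ℓ be a positive integer, let K = ℚ(ζ) be the 2ℓ-th cyclotomic field (CyclotomicField (2ℓ) ℚ) with ζ ∈ K a primitive 2ℓ-th root of unity. Then for every integer q, the field norm from K to ℚ satisfies: N_{K/ℚ}((q : K) − ζ²) = Φ_ℓ(q) if ℓ is odd, and N_{K/ℚ}((q : K) − ζ²) = Φ_ℓ(q)² if ℓ is even. -/
/-!
For `x` in a finite extension `L/K` and `a ∈ K`, the norm of `a - x` is
`(minpoly K x)(a) ^ [L : K(x)]`: in `K(x)` it is the characteristic polynomial of
multiplication by `x`, evaluated at `a`, and the norm from `L` down to `K(x)` raises it to the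
degree. Since `ζ²` is a primitive `ℓ`-th root of unity, its minimal polynomial over `ℚ` is `Φ_ℓ`
and `[K : ℚ(ζ²)] = φ(2ℓ) / φ(ℓ)`, which is `1` for odd `ℓ` and `2` for even `ℓ`.
-/

open Polynomial IntermediateField Module

theorem PowerBasis.norm_algebraMap_sub_gen {R S : Type*} [CommRing R] [Ring S] [Algebra R S]
    (pb : PowerBasis R S) (a : R) :
    Algebra.norm R (algebraMap R S a - pb.gen) = (minpoly R pb.gen).eval a := by
  classical
  rw [Algebra.norm_eq_matrix_det pb.basis, map_sub, AlgHom.commutes, ← charpoly_leftMulMatrix,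
    Matrix.eval_charpoly, Matrix.algebraMap_eq_diagonal]
  rfl

theorem Algebra.norm_algebraMap_sub {K L : Type*} [Field K] [Field L] [Algebra K L]
    [FiniteDimensional K L] (a : K) (x : L) :
    Algebra.norm K (algebraMap K L a - x) = (minpoly K x).eval a ^ finrank K⟮x⟯ L := by
  have hx : IsIntegral K x := .of_finite K x
  have hsub : algebraMap K L a - x =
      algebraMap K⟮x⟯ L (algebraMap K K⟮x⟯ a - AdjoinSimple.gen K x) := by
    simp
  have hgen := (IntermediateField.adjoin.powerBasis hx).norm_algebraMap_sub_gen a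
  rw [IntermediateField.adjoin.powerBasis_gen hx, minpoly_gen] at hgen
  rw [hsub, ← Algebra.norm_norm (S := K⟮x⟯), Algebra.norm_algebraMap, map_pow, hgen]

section PrimitiveRoot

variable {L : Type*} [Field L] [CharZero L] [FiniteDimensional ℚ L] {μ : L} {ℓ : ℕ}

theorem IsPrimitiveRoot.norm_intCast_sub (hμ : IsPrimitiveRoot μ ℓ) (hℓ : 0 < ℓ) (q : ℤ) :
    Algebra.norm ℚ ((q : L) - μ) = (((cyclotomic ℓ ℤ).eval q : ℤ) : ℚ) ^ finrank ℚ⟮μ⟯ L := by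
  rw [← map_intCast (algebraMap ℚ L), Algebra.norm_algebraMap_sub,
    ← cyclotomic_eq_minpoly_rat hμ hℓ, ← map_cyclotomic_int, eval_intCast_map, eq_intCast,
    Int.cast_id]

theorem IsPrimitiveRoot.totient_mul_finrank_adjoin (hμ : IsPrimitiveRoot μ ℓ) (hℓ : 0 < ℓ) :
    ℓ.totient * finrank ℚ⟮μ⟯ L = finrank ℚ L := by
  rw [← Module.finrank_mul_finrank ℚ ℚ⟮μ⟯ L, adjoin.finrank (hμ.isIntegral hℓ).tower_top,
    ← cyclotomic_eq_minpoly_rat hμ hℓ, natDegree_cyclotomic]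

end PrimitiveRoot

theorem norm_int_sub_primitiveRoot_sq_general (ℓ : ℕ) (n : ℕ+) (hn : (n : ℕ) = 2 * ℓ)
    (ζ : CyclotomicField n ℚ) (hζ : IsPrimitiveRoot ζ (2 * ℓ)) (q : ℤ) :
    (Odd ℓ →
      Algebra.norm ℚ ((q : CyclotomicField n ℚ) - ζ ^ 2) =
        ((((Polynomial.cyclotomic ℓ ℤ).eval q : ℤ) : ℚ))) ∧
    (Even ℓ →
      Algebra.norm ℚ ((q : CyclotomicField n ℚ) - ζ ^ 2) =
        ((((Polynomial.cyclotomic ℓ ℤ).eval q : ℤ) : ℚ)) ^ 2) := by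
  have hℓ : 0 < ℓ := by have := n.pos; omega
  have hμ : IsPrimitiveRoot (ζ ^ 2) ℓ := hζ.pow (by positivity) rfl
  -- not found by instance search: it finds `DivisionRing.toRatAlgebra`, which is not
  -- reducibly `CyclotomicField.algebra`
  have : IsCyclotomicExtension {(n : ℕ)} ℚ (CyclotomicField n ℚ) :=
    CyclotomicField.isCyclotomicExtension _ _
  have hdeg : ℓ.totient * finrank ℚ⟮ζ ^ 2⟯ (CyclotomicField n ℚ) = (2 * ℓ).totient := by
    rw [hμ.totient_mul_finrank_adjoin hℓ,
      IsCyclotomicExtension.finrank _ (cyclotomic.irreducible_rat n.pos), hn]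
  have htot : 0 < ℓ.totient := Nat.totient_pos.2 hℓ
  rw [hμ.norm_intCast_sub hℓ q]
  refine ⟨fun hodd => ?_, fun heven => ?_⟩
  · rw [Nat.totient_two_mul_of_odd hodd] at hdeg
    rw [(Nat.mul_eq_left htot.ne').1 hdeg, pow_one]
  · rw [Nat.totient_two_mul_of_even heven, mul_comm 2] at hdeg
    rw [Nat.eq_of_mul_eq_mul_left htot hdeg]

/-- Let `K = ℚ(ζ)` be the `2ℓ`-th cyclotomic field, with `ζ` a primitive `2ℓ`-th root of
unity.  Then for every integer `q`, the field norm satisfies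
`N_{K/ℚ}(q - ζ²) = Φ_ℓ(q)` if `ℓ` is odd, and `N_{K/ℚ}(q - ζ²) = Φ_ℓ(q)²` if `ℓ` is even. -/
theorem norm_int_sub_primitiveRoot_sq (ℓ : ℕ) (hℓ : 0 < ℓ) (n : ℕ+) (hn : (n : ℕ) = 2 * ℓ)
    (ζ : CyclotomicField n ℚ) (hζ : IsPrimitiveRoot ζ (2 * ℓ)) (q : ℤ) :
    (Odd ℓ →
      Algebra.norm ℚ ((q : CyclotomicField n ℚ) - ζ ^ 2) =
        ((((Polynomial.cyclotomic ℓ ℤ).eval q : ℤ) : ℚ))) ∧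
    (Even ℓ →
      Algebra.norm ℚ ((q : CyclotomicField n ℚ) - ζ ^ 2) =
        ((((Polynomial.cyclotomic ℓ ℤ).eval q : ℤ) : ℚ)) ^ 2) :=
  norm_int_sub_primitiveRoot_sq_general ℓ n hn ζ hζ q
end

section
/- Let K be a finite field and F a subfield of K, with q = |F| and ℓ = [K : F]. Let V be a K-vector space and let U be an F-submodule of V (V regarded as an F-vector space by restriction of scalars). If U is not closed under scalar multiplication by K (i.e. there exist λ ∈ K and u ∈ U with λ·u ∉ U), then Φ_ℓ(q) divides the cardinality of the (finite) set {λ·U : λ ∈ Kˣ} of F-submodules of V, where λ·U denotes the image of U under the F-linear map v ↦ λ·v. -/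
/-!
The scalars `c ∈ K` with `c • U ⊆ U` form an `F`-subalgebra of `K`, hence an intermediate field
`E`, and the stabilizer of `U` in `Kˣ` is exactly `Eˣ`. If `U` is not `K`-stable then `E ≠ K`, so
`d = [E : F]` is a proper divisor of `ℓ`, and orbit–stabilizer gives
`|Kˣ • U| · (q^d - 1) = q^ℓ - 1`. Since `(X^d - 1) · Φ_ℓ` divides `X^ℓ - 1`, cancelling
`q^d - 1` leaves `Φ_ℓ(q) ∣ |Kˣ • U|`.
-/

open Polynomial Pointwise Module

theorem Polynomial.eval_cyclotomic_dvd_of_mul_eq {R : Type*} [CommRing R] [IsDomain R]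
    {q N : R} {d n : ℕ} (hd : d ∈ n.properDivisors) (hq : q ^ d ≠ 1)
    (h : N * (q ^ d - 1) = q ^ n - 1) : (cyclotomic n R).eval q ∣ N := by
  have hdvd : (q ^ d - 1) * (cyclotomic n R).eval q ∣ (q ^ d - 1) * N := by
    rw [mul_comm _ N, h]
    simpa using eval_dvd (x := q) (X_pow_sub_one_mul_cyclotomic_dvd_X_pow_sub_one_of_dvd R hd)
  exact (mul_dvd_mul_iff_left (sub_ne_zero.mpr hq)).mp hdvd

theorem IntermediateField.finrank_mem_properDivisors {F K : Type*} [Field F] [Field K]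
    [Algebra F K] [FiniteDimensional F K] {E : IntermediateField F K} (hE : E ≠ ⊤) :
    finrank F E ∈ (finrank F K).properDivisors := by
  refine Nat.mem_properDivisors.mpr ⟨?_, ?_⟩
  · simpa using finrank_dvd_of_le_right (le_top : E ≤ ⊤)
  · refine Submodule.finrank_lt (s := E.toSubalgebra.toSubmodule) ?_
    simpa [← toSubalgebra_inj] using hE

namespace Submodule

section Semiring

variable {F : Type*} (K : Type*) {V : Type*} [CommSemiring F] [Semiring K] [Algebra F K]
  [AddCommMonoid V] [Module K V] [Module F V] [IsScalarTower F K V]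

def smulStabilizer (U : Submodule F V) : Subalgebra F K where
  carrier := {c | ∀ u ∈ U, c • u ∈ U}
  mul_mem' ha hb u hu := by
    rw [mul_smul]
    exact ha _ (hb u hu)
  add_mem' ha hb u hu := by
    rw [add_smul]
    exact U.add_mem (ha u hu) (hb u hu)
  algebraMap_mem' f u hu := by
    rw [algebraMap_smul]
    exact U.smul_mem f hu

variable {K}

@[simp]
theorem mem_smulStabilizer {U : Submodule F V} {c : K} :
    c ∈ U.smulStabilizer K ↔ ∀ u ∈ U, c • u ∈ U :=
  Iff.rfl

theorem smul_le_self_iff_mem_smulStabilizer {U : Submodule F V} {c : K} :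
    c • U ≤ U ↔ c ∈ U.smulStabilizer K := by
  simp [pointwise_smul_def, SetLike.le_def]

theorem stabilizer_units_eq_units_smulStabilizer (U : Submodule F V) :
    MulAction.stabilizer Kˣ U = (U.smulStabilizer K).toSubmonoid.units := by
  ext c
  change c • U = U ↔ (c : K) ∈ U.smulStabilizer K ∧ ((c⁻¹ : Kˣ) : K) ∈ U.smulStabilizer K
  simp only [← smul_le_self_iff_mem_smulStabilizer, ← Units.smul_def]
  constructor
  · intro h
    exact ⟨h.le, (inv_smul_eq_iff.mpr h.symm).le⟩
  · rintro ⟨h, h'⟩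
    refine h.antisymm ?_
    calc U = c • c⁻¹ • U := (smul_inv_smul c U).symm
      _ ≤ c • U := map_mono h'

end Semiring

section Field

variable {F K V : Type*} [Field F] [Field K] [Algebra F K] [Algebra.IsAlgebraic F K]
  [AddCommMonoid V] [Module K V] [Module F V] [IsScalarTower F K V]

variable (K) in
noncomputable def smulStabilizerField (U : Submodule F V) : IntermediateField F K :=
  subalgebraEquivIntermediateField (U.smulStabilizer K)

theorem smulStabilizerField_ne_top {U : Submodule F V}
    (hU : ∃ (c : K) (u : V), u ∈ U ∧ c • u ∉ U) : U.smulStabilizerField K ≠ ⊤ := by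
  obtain ⟨c, u, hu, hcu⟩ := hU
  intro h
  exact hcu ((h ▸ IntermediateField.mem_top : c ∈ U.smulStabilizerField K) u hu)

theorem card_stabilizer_units (U : Submodule F V) :
    Nat.card (MulAction.stabilizer Kˣ U) = Nat.card (U.smulStabilizerField K) - 1 := by
  rw [stabilizer_units_eq_units_smulStabilizer,
    Nat.card_congr (Submonoid.unitsEquivUnitsType _).toEquiv]
  exact Nat.card_units (U.smulStabilizerField K)

end Field

end Submodule

/-- Let `F ⊆ K` be finite fields with `q = |F|` and `ℓ = [K : F]`, let `V` be a `K`-vector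
space and `U` an `F`-submodule of `V`.  If `U` is not closed under scalar multiplication by
`K`, then `Φ_ℓ(q)` divides the cardinality of the orbit `{λ·U : λ ∈ Kˣ}` of `U` under the
action of `Kˣ` on `F`-submodules of `V`. -/
theorem cyclotomic_dvd_card_orbit_of_submodule (F K V : Type*) [Field F] [Field K]
    [Algebra F K] [Finite F] [Finite K] [AddCommGroup V] [Module K V] [Module F V]
    [IsScalarTower F K V] (U : Submodule F V)
    (hU : ∃ (c : K) (u : V), u ∈ U ∧ c • u ∉ U) :
    ((Polynomial.cyclotomic (Module.finrank F K) ℤ).eval (Nat.card F : ℤ)) ∣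
      (Nat.card (Set.range fun c : Kˣ =>
        Submodule.map ((LinearMap.lsmul K V (c : K)).restrictScalars F) U) : ℤ) := by
  set E := U.smulStabilizerField K
  have hq : 1 < Nat.card F := Finite.one_lt_card
  have horbit : Nat.card (MulAction.orbit Kˣ U) * (Nat.card F ^ finrank F E - 1) =
      Nat.card F ^ finrank F K - 1 := by
    rw [← natCard_eq_pow_finrank, ← natCard_eq_pow_finrank, ← U.card_stabilizer_units,
      ← Nat.card_units, Nat.card_coe_set_eq, ← MulAction.index_stabilizer, mul_comm,
      Subgroup.card_mul_index]
  have hd := IntermediateField.finrank_mem_properDivisors (U.smulStabilizerField_ne_top hU)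
  have hq_pow : (Nat.card F : ℤ) ^ finrank F E ≠ 1 :=
    (one_lt_pow₀ (by exact_mod_cast hq) finrank_pos.ne').ne'
  -- the `Set.range` in the goal unfolds to `MulAction.orbit Kˣ U` for the pointwise action
  zify [Nat.one_le_pow _ _ (zero_lt_one.trans hq)] at horbit
  exact eval_cyclotomic_dvd_of_mul_eq hd hq_pow horbit
end

section
/- Let K be a finite field and F a subfield of K, with q = |F| and ℓ = [K : F]. Let V be a finite-dimensional K-vector space, x : V → V a K-linear endomorphism, and m a natural number. Then the number of x-stable F-submodules U of V (i.e. F-submodules with x(U) ⊆ U) satisfying dim_F U = m is congruent, modulo Φ_ℓ(q), to the number of x-stable K-submodules W of V with ℓ·dim_K W = m. -/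
/-!
The unit group `Kˣ` acts on the `F`-subspaces of `V` by scaling; since `x` is `K`-linear this
action preserves `x`-stability, and it preserves `F`-dimension. Its fixed points are exactly the
`K`-subspaces. For any other `U`, the scalars `k` with `k • U ⊆ U` form an intermediate field
`E ≠ K`, of degree `d` a proper divisor of `ℓ`, and the stabilizer of `U` is `Eˣ`; so the orbit
of `U` has `(q^ℓ - 1)/(q^d - 1)` elements, a multiple of `Φ_ℓ(q)` because
`(X^d - 1) Φ_ℓ ∣ X^ℓ - 1`. Counting the orbits of stable subspaces of dimension `m` gives the
congruence.
-/

open MulAction Module Polynomial Pointwise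

namespace MulAction

variable {G α : Type*} [Group G] [MulAction G α]

theorem dvd_card_of_forall_dvd_index_stabilizer [Finite α] {n : ℤ}
    (h : ∀ a : α, n ∣ ((stabilizer G a).index : ℤ)) : n ∣ (Nat.card α : ℤ) := by
  have := Fintype.ofFinite (orbitRel.Quotient G α)
  rw [Nat.card_congr (selfEquivSigmaOrbits G α), Nat.card_sigma, Nat.cast_sum]
  exact Finset.dvd_sum fun ω _ => by
    rw [Nat.card_coe_set_eq, ← index_stabilizer]
    exact h _

theorem card_modEq_card_fixedPoints_of_dvd_index [Finite α] {n : ℤ}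
    (h : ∀ a ∉ fixedPoints G α, n ∣ ((stabilizer G a).index : ℤ)) :
    (Nat.card α : ℤ) ≡ Nat.card (fixedPoints G α) [ZMOD n] := by
  let moved : SubMulAction G α :=
    { carrier := (fixedPoints G α)ᶜ
      smul_mem' := fun g a ha => by
        rwa [Set.mem_compl_iff, ← subsingleton_orbit_iff_mem_fixedPoints, orbit_smul,
          subsingleton_orbit_iff_mem_fixedPoints] }
  have h_moved : n ∣ (Nat.card moved : ℤ) :=
    dvd_card_of_forall_dvd_index_stabilizer fun a => by
      rw [SubMulAction.stabilizer_of_subMul]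
      exact h a a.2
  calc (Nat.card α : ℤ) = Nat.card (fixedPoints G α) + Nat.card moved := by
        rw [← Set.ncard_add_ncard_compl (fixedPoints G α), Nat.card_coe_set_eq]; rfl
    _ ≡ Nat.card (fixedPoints G α) + 0 [ZMOD n] :=
        Int.ModEq.add_left _ (Int.modEq_zero_iff_dvd.mpr h_moved)
    _ = Nat.card (fixedPoints G α) := add_zero _

theorem card_subtype_modEq_card_fixedPoints_of_dvd_index [Finite α] {p : α → Prop}
    (hp : ∀ (g : G) {a : α}, p a → p (g • a)) {n : ℤ}
    (h : ∀ a, p a → a ∉ fixedPoints G α → n ∣ ((stabilizer G a).index : ℤ)) :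
    (Nat.card {a // p a} : ℤ) ≡ Nat.card {a // p a ∧ a ∈ fixedPoints G α} [ZMOD n] := by
  let s : SubMulAction G α := ⟨{a | p a}, hp⟩
  have h_fixed : fixedPoints G s ≃ {a // p a ∧ a ∈ fixedPoints G α} :=
    (Equiv.subtypeEquivRight fun a => by
        simp only [mem_fixedPoints, Subtype.ext_iff, SubMulAction.val_smul]).trans
      (Equiv.subtypeSubtypeEquivSubtypeInter p (· ∈ fixedPoints G α))
  rw [← Nat.card_congr h_fixed]
  refine card_modEq_card_fixedPoints_of_dvd_index (α := s) fun a ha => ?_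
  rw [SubMulAction.stabilizer_of_subMul]
  exact h a a.2 fun h_fix => ha fun g => Subtype.ext (h_fix g)

end MulAction

theorem natCard_units_eq_pow_finrank_sub_one (F L : Type*) [Field F] [Field L] [Algebra F L]
    [Finite L] : (Nat.card Lˣ : ℤ) = (Nat.card F : ℤ) ^ finrank F L - 1 := by
  have : Finite F := Finite.of_injective _ (algebraMap F L).injective
  rw [Nat.card_units, Nat.cast_sub Nat.card_pos, Module.natCard_eq_pow_finrank (K := F),
    Nat.cast_pow, Nat.cast_one]

theorem IntermediateField.cyclotomic_eval_dvd_index_range_unitsMap {F K : Type*} [Field F]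
    [Field K] [Algebra F K] [Finite K] {E : IntermediateField F K} (hE : E ≠ ⊤) :
    (cyclotomic (finrank F K) ℤ).eval (Nat.card F : ℤ) ∣
      ((Units.map (E.val : E →* K)).range.index : ℤ) := by
  set q : ℤ := (Nat.card F : ℤ)
  set H := (Units.map (E.val : E →* K)).range
  have h_card_H : Nat.card H = Nat.card Eˣ :=
    (Nat.card_congr (MonoidHom.ofInjective (Units.map_injective E.val.injective)).toEquiv).symm
  have h_proper : finrank F E ∈ (finrank F K).properDivisors := by
    have h_tower := finrank_mul_finrank F E K
    have h_top : finrank E K ≠ 1 := mt IntermediateField.finrank_eq_one_iff_eq_top.mp hE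
    have hd : 0 < finrank F E := finrank_pos
    have hk : 0 < finrank E K := finrank_pos
    refine Nat.mem_properDivisors.mpr ⟨Dvd.intro _ h_tower, ?_⟩
    rw [← h_tower]
    exact lt_mul_right hd (by omega)
  have h_poly : (q ^ finrank F E - 1) * (cyclotomic (finrank F K) ℤ).eval q ∣
      q ^ finrank F K - 1 := by
    simpa using
      eval_dvd (x := q) (X_pow_sub_one_mul_cyclotomic_dvd_X_pow_sub_one_of_dvd ℤ h_proper)
  have h_index : (H.index : ℤ) * Nat.card Eˣ = Nat.card Kˣ := by
    rw [← h_card_H]; exact_mod_cast H.index_mul_card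
  rw [← natCard_units_eq_pow_finrank_sub_one, ← natCard_units_eq_pow_finrank_sub_one,
    ← h_index, mul_comm (H.index : ℤ)] at h_poly
  exact (mul_dvd_mul_iff_left (by exact_mod_cast Nat.card_pos.ne')).mp h_poly

theorem Submodule.finrank_pointwise_smul {G R M : Type*} [Group G] [Semiring R]
    [AddCommMonoid M] [Module R M] [DistribMulAction G M] [SMulCommClass G R M] (g : G)
    (U : Submodule R M) : finrank R ↥(g • U) = finrank R U :=
  (DistribMulAction.toLinearEquiv R M g).finrank_map_eq U

namespace Submodule

variable {F K V : Type*} [Field F] [Field K] [Algebra F K] [AddCommGroup V] [Module K V]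
  [Module F V] [IsScalarTower F K V]

theorem apply_mem_units_smul (x : V →ₗ[K] V) {U : Submodule F V} (hU : ∀ u ∈ U, x u ∈ U)
    (c : Kˣ) {v : V} (hv : v ∈ c • U) : x v ∈ c • U := by
  obtain ⟨u, hu, rfl⟩ := (Submodule.mem_smul_pointwise_iff_exists v c U).mp hv
  rw [Units.smul_def c u, map_smul, ← Units.smul_def]
  exact Submodule.smul_mem_pointwise_smul _ c U (hU u hu)

theorem finrank_restrictScalars (W : Submodule K V) :
    finrank F (W.restrictScalars F) = finrank F K * finrank K W :=
  (finrank_mul_finrank F K W).symm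

variable (K) in
def multiplierField [Algebra.IsAlgebraic F K] (U : Submodule F V) : IntermediateField F K :=
  Subalgebra.IsAlgebraic.toIntermediateField
    (S := { carrier := {k | ∀ u ∈ U, k • u ∈ U}
            mul_mem' := fun ha hb u hu => by rw [mul_smul]; exact ha _ (hb u hu)
            add_mem' := fun ha hb u hu => by rw [add_smul]; exact U.add_mem (ha u hu) (hb u hu)
            algebraMap_mem' := fun f u hu => by rw [algebraMap_smul]; exact U.smul_mem f hu })
    fun k _ => Algebra.IsAlgebraic.isAlgebraic k

variable [Algebra.IsAlgebraic F K] {U : Submodule F V}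

theorem units_smul_le_iff (c : Kˣ) : c • U ≤ U ↔ (c : K) ∈ U.multiplierField K := by
  refine ⟨fun h u hu => h (Submodule.smul_mem_pointwise_smul u c U hu), ?_⟩
  rintro h _ ⟨u, hu, rfl⟩
  exact h u hu

theorem mem_stabilizer_units_iff (c : Kˣ) :
    c ∈ stabilizer Kˣ U ↔ (c : K) ∈ U.multiplierField K := by
  rw [mem_stabilizer_iff]
  refine ⟨fun h => (units_smul_le_iff c).mp h.le,
    fun h => le_antisymm ((units_smul_le_iff c).mpr h) ?_⟩
  have h_inv : c⁻¹ • U ≤ U := by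
    rw [units_smul_le_iff, Units.val_inv_eq_inv_val]
    exact inv_mem h
  calc U = c • c⁻¹ • U := (smul_inv_smul c U).symm
    _ ≤ c • U := Submodule.map_mono h_inv

theorem stabilizer_units_eq_range :
    stabilizer Kˣ U =
      (Units.map ((U.multiplierField K).val : U.multiplierField K →* K)).range := by
  ext c
  rw [mem_stabilizer_units_iff, MonoidHom.mem_range]
  refine ⟨fun h => ⟨Units.mk0 ⟨c, h⟩ fun h0 => c.ne_zero (congrArg Subtype.val h0),
    Units.ext rfl⟩, ?_⟩
  rintro ⟨e, rfl⟩
  exact (e : U.multiplierField K).2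

theorem mem_fixedPoints_iff_multiplierField_eq_top :
    U ∈ fixedPoints Kˣ (Submodule F V) ↔ U.multiplierField K = ⊤ := by
  refine ⟨fun h => eq_top_iff.mpr fun k _ => ?_, fun h c => ?_⟩
  · rcases eq_or_ne k 0 with rfl | hk
    · exact zero_mem _
    · exact (mem_stabilizer_units_iff (Units.mk0 k hk)).mp (h _)
  · exact (mem_stabilizer_units_iff c).mpr (h ▸ IntermediateField.mem_top)

theorem multiplierField_eq_top_iff :
    U.multiplierField K = ⊤ ↔
      U ∈ Set.range (Submodule.restrictScalars F : Submodule K V → _) := by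
  refine ⟨fun h => ⟨{ U with smul_mem' := fun k u hu => eq_top_iff.mp h trivial u hu }, rfl⟩,
    ?_⟩
  rintro ⟨W, rfl⟩
  exact eq_top_iff.mpr fun k _ u hu => W.smul_mem k hu

theorem range_restrictScalars_eq_fixedPoints :
    Set.range (Submodule.restrictScalars F : Submodule K V → _) =
      fixedPoints Kˣ (Submodule F V) := by
  ext U
  rw [mem_fixedPoints_iff_multiplierField_eq_top, multiplierField_eq_top_iff]

theorem cyclotomic_eval_dvd_index_stabilizer [Finite K]
    (hU : U ∉ fixedPoints Kˣ (Submodule F V)) :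
    (cyclotomic (finrank F K) ℤ).eval (Nat.card F : ℤ) ∣
      ((stabilizer Kˣ U).index : ℤ) := by
  rw [stabilizer_units_eq_range]
  exact IntermediateField.cyclotomic_eval_dvd_index_range_unitsMap
    (mt mem_fixedPoints_iff_multiplierField_eq_top.mpr hU)

noncomputable def restrictScalarsEquivFixedPoints :
    Submodule K V ≃ fixedPoints Kˣ (Submodule F V) :=
  (Equiv.ofInjective _ (Submodule.restrictScalars_injective F K V)).trans
    (Equiv.setCongr range_restrictScalars_eq_fixedPoints)

end Submodule

theorem card_stable_submodules_modEq_cyclotomic_general (F K V : Type*) [Field F] [Field K]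
    [Algebra F K] [Finite K] [AddCommGroup V] [Module K V] [Module F V]
    [IsScalarTower F K V] [FiniteDimensional K V] (x : V →ₗ[K] V) (m : ℕ) :
    (Nat.card {U : Submodule F V //
        (∀ u ∈ U, x u ∈ U) ∧ Module.finrank F U = m} : ℤ) ≡
      (Nat.card {W : Submodule K V //
        (∀ u ∈ W, x u ∈ W) ∧ Module.finrank F K * Module.finrank K W = m} : ℤ)
      [ZMOD ((Polynomial.cyclotomic (Module.finrank F K) ℤ).eval (Nat.card F : ℤ))] := by
  have : Finite V := Module.finite_of_finite K
  let P (U : Submodule F V) : Prop := (∀ u ∈ U, x u ∈ U) ∧ finrank F U = m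
  have hP (c : Kˣ) {U : Submodule F V} (hU : P U) : P (c • U) :=
    ⟨fun _ => Submodule.apply_mem_units_smul x hU.1 c,
      (Submodule.finrank_pointwise_smul c U).trans hU.2⟩
  have e : {W : Submodule K V // (∀ u ∈ W, x u ∈ W) ∧ finrank F K * finrank K W = m} ≃
      {U // P U ∧ U ∈ fixedPoints Kˣ (Submodule F V)} :=
    (Submodule.restrictScalarsEquivFixedPoints.subtypeEquiv fun W => by
        rw [← Submodule.finrank_restrictScalars]; rfl).trans
      ((Equiv.subtypeSubtypeEquivSubtypeInter _ P).trans
        (Equiv.subtypeEquivRight fun _ => and_comm))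
  rw [Nat.card_congr e]
  exact MulAction.card_subtype_modEq_card_fixedPoints_of_dvd_index hP
    fun U _ hU => Submodule.cyclotomic_eval_dvd_index_stabilizer hU

/-- Let `F ⊆ K` be finite fields with `q = |F|` and `ℓ = [K : F]`, `V` a finite-dimensional
`K`-vector space, and `x : V → V` a `K`-linear endomorphism.  Then the number of `x`-stable
`F`-submodules `U` of `V` with `dim_F U = m` is congruent, modulo `Φ_ℓ(q)`, to the number
of `x`-stable `K`-submodules `W` of `V` with `ℓ·dim_K W = m`. -/
theorem card_stable_submodules_modEq_cyclotomic (F K V : Type*) [Field F] [Field K]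
    [Algebra F K] [Finite F] [Finite K] [AddCommGroup V] [Module K V] [Module F V]
    [IsScalarTower F K V] [FiniteDimensional K V] (x : V →ₗ[K] V) (m : ℕ) :
    (Nat.card {U : Submodule F V //
        (∀ u ∈ U, x u ∈ U) ∧ Module.finrank F U = m} : ℤ) ≡
      (Nat.card {W : Submodule K V //
        (∀ u ∈ W, x u ∈ W) ∧ Module.finrank F K * Module.finrank K W = m} : ℤ)
      [ZMOD ((Polynomial.cyclotomic (Module.finrank F K) ℤ).eval (Nat.card F : ℤ))] :=
  card_stable_submodules_modEq_cyclotomic_general F K V x m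
end

section
/- Let K be a finite field and F a subfield of K, with q = |F| and ℓ = [K : F]. Let V be a finite-dimensional K-vector space and n a positive integer. Let Fl denote the finite set of chains 0 = G₀ ⊆ G₁ ⊆ ⋯ ⊆ Gₙ = V of F-submodules of V, on which Kˣ acts by λ·(Gᵢ) = (λ·Gᵢ), and let Fl^K ⊆ Fl be the subset of chains all of whose members are K-submodules. Suppose f, g : Fl × Fl → ℤ are invariant under the diagonal Kˣ-action, i.e. f(λ·G, λ·G′) = f(G, G′) and g(λ·G, λ·G′) = g(G, G′) for all λ ∈ Kˣ. Then for all F⁰, F¹ ∈ Fl^K, the convolution sums satisfy ∑_{G ∈ Fl} f(F⁰, G)·g(G, F¹) ≡ ∑_{G ∈ Fl^K} f(F⁰, G)·g(G, F¹) modulo Φ_ℓ(q). -/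
open Polynomial

/-- The action of `λ ∈ Kˣ` on tuples of `F`-submodules of a `K`-vector space `V`:
each member is replaced by its image under `v ↦ λ • v`. -/
noncomputable def flagSmul {F K V : Type*} [Field F] [Field K] [Algebra F K]
    [AddCommGroup V] [Module K V] [Module F V] [IsScalarTower F K V] {n : ℕ}
    (c : Kˣ) (G : Fin n → Submodule F V) : Fin n → Submodule F V :=
  fun i => Submodule.map ((LinearMap.lsmul K V (c : K)).restrictScalars F) (G i)

/-- `G` is an `n`-step flag of `F`-submodules of `V`:
`0 = G₀ ⊆ G₁ ⊆ ⋯ ⊆ Gₙ = V`. -/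
def IsFlag {F V : Type*} [Field F] [AddCommGroup V] [Module F V] {n : ℕ}
    (G : Fin (n + 1) → Submodule F V) : Prop :=
  G 0 = ⊥ ∧ G (Fin.last n) = ⊤ ∧ Monotone G

/-- Every member of the tuple `G` of `F`-submodules is closed under `K`-scalars,
i.e. is (the restriction of) a `K`-submodule. -/
def IsKFlag (K : Type*) {F V : Type*} [Field F] [Field K] [AddCommGroup V] [Module K V]
    [Module F V] {n : ℕ} (G : Fin (n + 1) → Submodule F V) : Prop :=
  ∀ (i : Fin (n + 1)) (c : K), ∀ u ∈ G i, c • u ∈ G i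

section Aux
variable {F K V : Type*} [Field F] [Field K] [Algebra F K]
  [AddCommGroup V] [Module K V] [Module F V] [IsScalarTower F K V] {m n : ℕ}

lemma mem_flagSmul {c : Kˣ} {G : Fin m → Submodule F V} {i : Fin m} {x : V} :
    x ∈ flagSmul c G i ↔ ∃ u ∈ G i, (c : K) • u = x := by
  simp [flagSmul, Submodule.mem_map]

lemma flagSmul_one (G : Fin m → Submodule F V) : flagSmul (1 : Kˣ) G = G := by
  funext i; ext x; simp [mem_flagSmul]

lemma flagSmul_mul (c c' : Kˣ) (G : Fin m → Submodule F V) :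
    flagSmul (c * c') G = flagSmul c (flagSmul c' G) := by
  funext i; ext x
  simp only [mem_flagSmul]
  constructor
  · rintro ⟨u, hu, rfl⟩
    exact ⟨(c' : K) • u, ⟨u, hu, rfl⟩, by rw [smul_smul]; rfl⟩
  · rintro ⟨y, ⟨u, hu, rfl⟩, rfl⟩
    exact ⟨u, hu, by rw [smul_smul]; rfl⟩

lemma isFlag_flagSmul (c : Kˣ) {G : Fin (n + 1) → Submodule F V} (h : IsFlag G) :
    IsFlag (flagSmul c G) := by
  obtain ⟨h0, hT, hM⟩ := h
  refine ⟨?_, ?_, fun i j hij => Submodule.map_mono (hM hij)⟩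
  · show Submodule.map _ (G 0) = ⊥
    rw [h0, Submodule.map_bot]
  · show Submodule.map _ (G (Fin.last n)) = ⊤
    rw [hT, Submodule.map_top, LinearMap.range_eq_top]
    intro v
    refine ⟨(c : K)⁻¹ • v, ?_⟩
    show (c : K) • ((c : K)⁻¹ • v) = v
    rw [smul_smul, mul_inv_cancel₀ (Units.ne_zero c), one_smul]

lemma isKFlag_flagSmul (c : Kˣ) {G : Fin (n + 1) → Submodule F V} (h : IsKFlag K G) :
    IsKFlag K (flagSmul c G) := by
  intro i a x hx
  rw [mem_flagSmul] at hx ⊢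
  obtain ⟨u, hu, rfl⟩ := hx
  exact ⟨a • u, h i a u hu, (smul_comm _ _ _)⟩

lemma isKFlag_flagSmul_iff (c : Kˣ) {G : Fin (n + 1) → Submodule F V} :
    IsKFlag K (flagSmul c G) ↔ IsKFlag K G := by
  refine ⟨fun h => ?_, isKFlag_flagSmul c⟩
  have := isKFlag_flagSmul c⁻¹ h
  rwa [← flagSmul_mul, inv_mul_cancel, flagSmul_one] at this

lemma flagSmul_eq_self {G : Fin (n + 1) → Submodule F V} (h : IsKFlag K G) (c : Kˣ) :
    flagSmul c G = G := by
  funext i; ext x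
  rw [mem_flagSmul]
  constructor
  · rintro ⟨u, hu, rfl⟩; exact h i _ u hu
  · intro hx
    exact ⟨(c⁻¹ : K) • x, h i _ x hx, by rw [smul_smul, mul_inv_cancel₀ (Units.ne_zero c), one_smul]⟩

/-- The subalgebra of `K` of scalars preserving every member of `G`. -/
def flagStabAlg (G : Fin m → Submodule F V) : Subalgebra F K where
  carrier := {c | ∀ i, ∀ u ∈ G i, c • u ∈ G i}
  mul_mem' := fun {a b} ha hb i u hu => by
    rw [mul_smul]; exact ha i _ (hb i u hu)
  one_mem' := fun i u hu => by rwa [one_smul]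
  add_mem' := fun {a b} ha hb i u hu => by
    rw [add_smul]; exact (G i).add_mem (ha i u hu) (hb i u hu)
  zero_mem' := fun i u hu => by rw [zero_smul]; exact (G i).zero_mem
  algebraMap_mem' := fun r i u hu => by
    rw [algebraMap_smul]; exact (G i).smul_mem r hu

lemma mem_flagStabAlg {G : Fin m → Submodule F V} {c : K} :
    c ∈ flagStabAlg G ↔ ∀ i, ∀ u ∈ G i, c • u ∈ G i := Iff.rfl

lemma inv_mem_flagStabAlg [Finite V] {G : Fin m → Submodule F V} (c : K)
    (hc : c ∈ flagStabAlg G) : c⁻¹ ∈ flagStabAlg G := by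
  rcases eq_or_ne c 0 with rfl | h0
  · simpa using (flagStabAlg G).zero_mem
  intro i u hu
  have hsurj : Function.Surjective (fun w : G i => (⟨c • w.1, hc i _ w.2⟩ : G i)) := by
    apply Finite.surjective_of_injective
    intro a b hab
    exact Subtype.ext (smul_right_injective V h0 (congrArg Subtype.val hab))
  obtain ⟨w, hw⟩ := hsurj ⟨u, hu⟩
  have hw' : c • (w : V) = u := congrArg Subtype.val hw
  have : c⁻¹ • u = (w : V) := by
    rw [← hw', smul_smul, inv_mul_cancel₀ h0, one_smul]
  rw [this]; exact w.2

/-- The stabilizer field of a flag. -/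
noncomputable def flagStabField [Finite V] (G : Fin m → Submodule F V) : IntermediateField F K :=
  (flagStabAlg G).toIntermediateField (fun c hc => inv_mem_flagStabAlg c hc)

lemma mem_flagStabField [Finite V] {G : Fin m → Submodule F V} {c : K} :
    c ∈ flagStabField G ↔ ∀ i, ∀ u ∈ G i, c • u ∈ G i := Iff.rfl

lemma flagSmul_eq_iff [Finite V] {c : Kˣ} {G : Fin m → Submodule F V} :
    flagSmul c G = G ↔ (c : K) ∈ flagStabField G := by
  constructor
  · intro h i u hu
    have : (c : K) • u ∈ flagSmul c G i := mem_flagSmul.2 ⟨u, hu, rfl⟩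
    rwa [h] at this
  · intro hc
    funext i; ext x
    rw [mem_flagSmul]
    constructor
    · rintro ⟨u, hu, rfl⟩; exact hc i u hu
    · intro hx
      refine ⟨(c : K)⁻¹ • x, inv_mem_flagStabAlg _ hc i x hx, ?_⟩
      rw [smul_smul, mul_inv_cancel₀ (Units.ne_zero c), one_smul]

end Aux

lemma cyclo_mul_dvd {q : ℤ} {d l : ℕ} (hd : 0 < d) (hl : 0 < l) (hdl : d ∣ l) (hne : d ≠ l) :
    (cyclotomic l ℤ).eval q * (q ^ d - 1) ∣ q ^ l - 1 := by
  have hdlt : d < l := lt_of_le_of_ne (Nat.le_of_dvd hl hdl) hne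
  have hnotmem : l ∉ Nat.divisors d := by
    intro h
    exact absurd (Nat.le_of_dvd hd (Nat.mem_divisors.1 h).1) (not_le.2 hdlt)
  have hsub : insert l (Nat.divisors d) ⊆ Nat.divisors l := by
    intro e he
    rcases Finset.mem_insert.1 he with rfl | he
    · exact Nat.mem_divisors.2 ⟨dvd_rfl, hl.ne'⟩
    · exact Nat.mem_divisors.2 ⟨(Nat.mem_divisors.1 he).1.trans hdl, hl.ne'⟩
  have hpoly : (cyclotomic l ℤ) * (X ^ d - 1) ∣ (X ^ l - 1 : ℤ[X]) := by
    rw [← prod_cyclotomic_eq_X_pow_sub_one hd ℤ, ← prod_cyclotomic_eq_X_pow_sub_one hl ℤ]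
    have h2 := Finset.prod_dvd_prod_of_subset (insert l (Nat.divisors d)) (Nat.divisors l)
      (fun i => cyclotomic i ℤ) hsub
    rwa [Finset.prod_insert hnotmem] at h2
  simpa using map_dvd (evalRingHom q) hpoly

section Aux2
variable {F K V : Type*} [Field F] [Field K] [Algebra F K]
  [AddCommGroup V] [Module K V] [Module F V] [IsScalarTower F K V] {m n : ℕ}

noncomputable instance flagMulAction : MulAction Kˣ (Fin m → Submodule F V) where
  smul := flagSmul
  one_smul := flagSmul_one
  mul_smul := flagSmul_mul

lemma flag_smul_def (c : Kˣ) (G : Fin m → Submodule F V) : c • G = flagSmul c G := rfl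

lemma mem_stabilizer_flag [Finite V] {c : Kˣ} {G : Fin m → Submodule F V} :
    c ∈ MulAction.stabilizer Kˣ G ↔ (c : K) ∈ flagStabField G := by
  rw [MulAction.mem_stabilizer_iff, flag_smul_def, flagSmul_eq_iff]

noncomputable def stabEquivUnits [Finite V] (G : Fin m → Submodule F V) :
    (MulAction.stabilizer Kˣ G) ≃ Units ↥(flagStabField (K := K) G) where
  toFun u := Units.mk0 ⟨(u.1 : K), mem_stabilizer_flag.1 u.2⟩
    (fun h => Units.ne_zero u.1 (congrArg Subtype.val h))
  invFun x := ⟨Units.mk0 (x.1 : K)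
      (fun h => Units.ne_zero x (Subtype.ext h)),
    mem_stabilizer_flag.2 x.1.2⟩
  left_inv u := by ext; rfl
  right_inv x := by ext; rfl

end Aux2

/-- Let `F ⊆ K` be finite fields with `q = |F|`, `ℓ = [K : F]`, `V` a finite-dimensional
`K`-vector space, and `Fl` the set of `n`-step flags of `F`-submodules of `V`, on which `Kˣ`
acts diagonally.  If `f, g : Fl × Fl → ℤ` are invariant under the diagonal `Kˣ`-action, then
for flags `F⁰, F¹` all of whose members are `K`-submodules, the convolution
`∑_{G ∈ Fl} f(F⁰,G)·g(G,F¹)` is congruent modulo `Φ_ℓ(q)` to the same sum restricted to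
flags of `K`-submodules. -/
theorem convolution_modEq_cyclotomic (F K V : Type*) [Field F] [Field K]
    [Algebra F K] [Finite F] [Finite K] [AddCommGroup V] [Module K V] [Module F V]
    [IsScalarTower F K V] [FiniteDimensional K V] (n : ℕ) (hn : 0 < n)
    (f g : (Fin (n + 1) → Submodule F V) → (Fin (n + 1) → Submodule F V) → ℤ)
    (hf : ∀ (c : Kˣ) (G G' : Fin (n + 1) → Submodule F V), IsFlag G → IsFlag G' →
      f (flagSmul c G) (flagSmul c G') = f G G')
    (hg : ∀ (c : Kˣ) (G G' : Fin (n + 1) → Submodule F V), IsFlag G → IsFlag G' →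
      g (flagSmul c G) (flagSmul c G') = g G G')
    (F0 F1 : Fin (n + 1) → Submodule F V)
    (hF0 : IsFlag F0) (hF0K : IsKFlag K F0) (hF1 : IsFlag F1) (hF1K : IsKFlag K F1) :
    (∑ᶠ (G : Fin (n + 1) → Submodule F V) (_ : IsFlag G), f F0 G * g G F1) ≡
      (∑ᶠ (G : Fin (n + 1) → Submodule F V) (_ : IsFlag G ∧ IsKFlag K G), f F0 G * g G F1)
      [ZMOD ((Polynomial.cyclotomic (Module.finrank F K) ℤ).eval (Nat.card F : ℤ))] := by
  classical
  haveI : Finite V := Module.finite_of_finite K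
  haveI : Finite (Submodule F V) :=
    Finite.of_injective (fun s => (s : Set V)) SetLike.coe_injective
  haveI : Fintype (Fin (n + 1) → Submodule F V) := Fintype.ofFinite _
  haveI : Fintype K := Fintype.ofFinite K
  haveI : Fintype F := Fintype.ofFinite F
  set q : ℕ := Nat.card F with hq
  set l : ℕ := Module.finrank F K with hl
  set M : ℤ := (cyclotomic l ℤ).eval (q : ℤ) with hM
  set v : (Fin (n + 1) → Submodule F V) → ℤ := fun G => f F0 G * g G F1 with hv
  have hinv : ∀ (c : Kˣ) (G : Fin (n + 1) → Submodule F V), IsFlag G →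
      v (flagSmul c G) = v G := by
    intro c G hG
    have h1 : f F0 (flagSmul c G) = f F0 G := by
      conv_lhs => rw [← flagSmul_eq_self hF0K c]
      exact hf c F0 G hF0 hG
    have h2 : g (flagSmul c G) F1 = g G F1 := by
      conv_lhs => rw [← flagSmul_eq_self hF1K c]
      exact hg c G F1 hG hF1
    simp only [hv, h1, h2]
  rw [finsum_cond_eq_sum_of_cond_iff (fun G => f F0 G * g G F1)
      (t := Finset.univ.filter IsFlag) (fun {x} _ => by simp),
    finsum_cond_eq_sum_of_cond_iff (fun G => f F0 G * g G F1)
      (t := Finset.univ.filter (fun G => IsFlag G ∧ IsKFlag K G)) (fun {x} _ => by simp)]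
  refine Int.modEq_iff_dvd.2 ?_
  set T : Finset (Fin (n + 1) → Submodule F V) :=
    Finset.univ.filter (fun G => IsFlag G ∧ ¬ IsKFlag K G) with hT
  have key : M ∣ ∑ G ∈ T, v G := by
    letI R : Setoid (Fin (n + 1) → Submodule F V) := MulAction.orbitRel Kˣ _
    rw [Finset.sum_partition R]
    refine Finset.dvd_sum ?_
    intro xbar hxbar
    obtain ⟨x, hxT, rfl⟩ := Finset.mem_image.1 hxbar
    obtain ⟨hxFlag, hxK⟩ := (Finset.mem_filter.1 hxT).2
    haveI : Fintype (MulAction.orbit Kˣ x) := Fintype.ofFinite _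
    have horb : T.filter (fun y => Quotient.mk R y = Quotient.mk R x) = (MulAction.orbit Kˣ x).toFinset := by
      ext y
      simp only [Finset.mem_filter, Set.mem_toFinset]
      constructor
      · rintro ⟨-, h⟩
        exact Quotient.exact h
      · intro hy
        obtain ⟨c, rfl⟩ := hy
        refine ⟨Finset.mem_filter.2 ⟨Finset.mem_univ _, isFlag_flagSmul c hxFlag,
          fun h => hxK ((isKFlag_flagSmul_iff c).1 h)⟩, Quotient.sound ⟨c, rfl⟩⟩
    rw [horb]
    have hconst : ∀ y ∈ (MulAction.orbit Kˣ x).toFinset, v y = v x := by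
      intro y hy
      obtain ⟨c, rfl⟩ := Set.mem_toFinset.1 hy
      exact hinv c x hxFlag
    rw [Finset.sum_congr rfl hconst, Finset.sum_const, Set.toFinset_card, nsmul_eq_mul]
    refine Dvd.dvd.mul_right ?_ _
    -- now: M ∣ (Fintype.card (orbit) : ℤ)
    set E := flagStabField (K := K) x with hE
    set d : ℕ := Module.finrank F ↥E with hd
    haveI : Fintype ↥E := Fintype.ofFinite _
    haveI : Fintype (MulAction.stabilizer Kˣ x) := Fintype.ofFinite _
    have horbstab := MulAction.card_orbit_mul_card_stabilizer_eq_card_group Kˣ x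
    have hqF : q = Fintype.card F := Nat.card_eq_fintype_card
    have hstab : Fintype.card (MulAction.stabilizer Kˣ x) = q ^ d - 1 := by
      rw [Fintype.card_congr (stabEquivUnits (K := K) x), Fintype.card_units,
        Module.card_eq_pow_finrank (K := F) (V := ↥E), hqF]
    have hKu : Fintype.card Kˣ = q ^ l - 1 := by
      rw [Fintype.card_units, Module.card_eq_pow_finrank (K := F) (V := K), hqF]
    have hd0 : 0 < d := Module.finrank_pos
    have hl0 : 0 < l := Module.finrank_pos
    have hdl : d ∣ l := ⟨Module.finrank ↥E K, (Module.finrank_mul_finrank F ↥E K).symm⟩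
    have hdne : d ≠ l := by
      intro hdeq
      apply hxK
      intro i c u hu
      have hcard : Fintype.card ↥E = Fintype.card K := by
        rw [Module.card_eq_pow_finrank (K := F) (V := ↥E), Module.card_eq_pow_finrank (K := F) (V := K),
          ← hqF, ← hd, ← hl, hdeq]
      obtain ⟨e, rfl⟩ :=
        ((Fintype.bijective_iff_injective_and_card (Subtype.val : ↥E → K)).2
          ⟨Subtype.val_injective, hcard⟩).2 c
      exact e.2 i u hu
    have hq2 : 2 ≤ q := Finite.one_lt_card
    --
    have hdvd1 : (M * ((q : ℤ) ^ d - 1)) ∣ ((q : ℤ) ^ l - 1) := cyclo_mul_dvd hd0 hl0 hdl hdne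
    have h1 : (1 : ℕ) ≤ q ^ d := Nat.one_le_pow _ _ (by omega)
    have h2 : (1 : ℕ) ≤ q ^ l := Nat.one_le_pow _ _ (by omega)
    have hcards : (Fintype.card (MulAction.orbit Kˣ x) : ℤ) * ((q : ℤ) ^ d - 1)
        = (q : ℤ) ^ l - 1 := by
      rw [hstab, hKu] at horbstab
      have := congrArg (Nat.cast : ℕ → ℤ) horbstab
      push_cast [Nat.cast_sub h1, Nat.cast_sub h2] at this
      exact this
    have hne0 : ((q : ℤ) ^ d - 1) ≠ 0 := by
      have : (2 : ℤ) ≤ (q : ℤ) ^ d := by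
        calc (2 : ℤ) ≤ (q : ℤ) := by exact_mod_cast hq2
        _ ≤ (q : ℤ) ^ d := le_self_pow₀ (by omega) hd0.ne'
      omega
    obtain ⟨k, hk⟩ := hdvd1
    refine ⟨k, mul_right_cancel₀ hne0 ?_⟩
    rw [hcards, hk]; ring
  have hsplit := Finset.sum_filter_add_sum_filter_not (Finset.univ.filter IsFlag)
    (fun G => IsKFlag K G) v
  rw [Finset.filter_filter, Finset.filter_filter] at hsplit
  have hgoal : (∑ G ∈ Finset.univ.filter (fun G => IsFlag G ∧ IsKFlag K G), v G)
      - (∑ G ∈ Finset.univ.filter IsFlag, v G) = -(∑ G ∈ T, v G) := by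
    rw [← hsplit, hT]; ring
  rw [hv] at hgoal
  rw [hgoal]
  exact dvd_neg.2 key
end
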